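/- With f as defined, f is convex and decreasing on the interval [-√2/4 - 1/2, -1/√2]. -/
import Mathlib

open Real

/-- Gegenbauer (Legendre) polynomials for dimension 3:
`G 0 t = 1`, `G 1 t = t`, `G (k+2) t = ((2(k+2)-1) t G (k+1) t - (k+1) G k t)/(k+2)`. -/
noncomputable def G : ℕ → ℝ → ℝ
  | 0, _ => 1
  | 1, t => t
  | (k+2), t => ((2*(k:ℝ)+3) * t * G (k+1) t - ((k:ℝ)+1) * G k t) / ((k:ℝ)+2)

/-- The test function from the paper. -/
noncomputable def f (t : ℝ) : ℝ :=
  0.09465869 + 0.17273741 * G 1 t + 0.33128438 * G 2 t + 0.17275228 * G 3 t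
    + 0.18905584 * G 4 t + 0.00334265 * G 5 t + 0.03616728 * G 9 t

private noncomputable def P (t : ℝ) : ℝ :=
  -2189/25000000 + 14210999/1600000000*t^1 + -21203283/100000000*t^2
    + -3611121/4000000*t^3 + 8271193/10000000*t^4 + 2046973257/400000000*t^5
    + -581841117/80000000*t^7 + 1099033221/320000000*t^9

private noncomputable def P1 (t : ℝ) : ℝ :=
  14210999/1600000000 + -21203283/50000000*t^1 + -10833363/4000000*t^2
    + 8271193/2500000*t^3 + 2046973257/80000000*t^4
    + -4072887819/80000000*t^6 + 9891298989/320000000*t^8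

private noncomputable def P2 (t : ℝ) : ℝ :=
  -21203283/50000000 + -10833363/2000000*t^1 + 24813579/2500000*t^2
    + 2046973257/20000000*t^3 + -12218663457/40000000*t^5 + 9891298989/40000000*t^7

private lemma f_eq_P : f = P := by
  funext t
  simp only [f, G, P]
  norm_num
  ring

private lemma hasDerivAt_P (t : ℝ) : HasDerivAt P (P1 t) t := by
  have h : HasDerivAt (fun t : ℝ =>
      -2189/25000000 + 14210999/1600000000*t^1 + -21203283/100000000*t^2
        + -3611121/4000000*t^3 + 8271193/10000000*t^4 + 2046973257/400000000*t^5
        + -581841117/80000000*t^7 + 1099033221/320000000*t^9)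
      (0 + 14210999/1600000000*((1:ℕ)*t^0) + -21203283/100000000*((2:ℕ)*t^1)
        + -3611121/4000000*((3:ℕ)*t^2) + 8271193/10000000*((4:ℕ)*t^3)
        + 2046973257/400000000*((5:ℕ)*t^4) + -581841117/80000000*((7:ℕ)*t^6)
        + 1099033221/320000000*((9:ℕ)*t^8)) t := by
    exact (((((((hasDerivAt_const t (-2189/25000000)).add
      ((hasDerivAt_pow 1 t).const_mul (14210999/1600000000))).add
      ((hasDerivAt_pow 2 t).const_mul (-21203283/100000000))).add
      ((hasDerivAt_pow 3 t).const_mul (-3611121/4000000))).add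
      ((hasDerivAt_pow 4 t).const_mul (8271193/10000000))).add
      ((hasDerivAt_pow 5 t).const_mul (2046973257/400000000))).add
      ((hasDerivAt_pow 7 t).const_mul (-581841117/80000000))).add
      ((hasDerivAt_pow 9 t).const_mul (1099033221/320000000))
  have : P1 t = (0 + 14210999/1600000000*((1:ℕ)*t^0) + -21203283/100000000*((2:ℕ)*t^1)
        + -3611121/4000000*((3:ℕ)*t^2) + 8271193/10000000*((4:ℕ)*t^3)
        + 2046973257/400000000*((5:ℕ)*t^4) + -581841117/80000000*((7:ℕ)*t^6)
        + 1099033221/320000000*((9:ℕ)*t^8)) := by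
    simp only [P1]; push_cast; ring
  rw [this]
  exact h

private lemma hasDerivAt_P1 (t : ℝ) : HasDerivAt P1 (P2 t) t := by
  have h : HasDerivAt (fun t : ℝ =>
      14210999/1600000000 + -21203283/50000000*t^1 + -10833363/4000000*t^2
        + 8271193/2500000*t^3 + 2046973257/80000000*t^4
        + -4072887819/80000000*t^6 + 9891298989/320000000*t^8)
      (0 + -21203283/50000000*((1:ℕ)*t^0) + -10833363/4000000*((2:ℕ)*t^1)
        + 8271193/2500000*((3:ℕ)*t^2) + 2046973257/80000000*((4:ℕ)*t^3)
        + -4072887819/80000000*((6:ℕ)*t^5) + 9891298989/320000000*((8:ℕ)*t^7)) t := by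
    exact ((((((hasDerivAt_const t (14210999/1600000000)).add
      ((hasDerivAt_pow 1 t).const_mul (-21203283/50000000))).add
      ((hasDerivAt_pow 2 t).const_mul (-10833363/4000000))).add
      ((hasDerivAt_pow 3 t).const_mul (8271193/2500000))).add
      ((hasDerivAt_pow 4 t).const_mul (2046973257/80000000))).add
      ((hasDerivAt_pow 6 t).const_mul (-4072887819/80000000))).add
      ((hasDerivAt_pow 8 t).const_mul (9891298989/320000000))
  have : P2 t = (0 + -21203283/50000000*((1:ℕ)*t^0) + -10833363/4000000*((2:ℕ)*t^1)
        + 8271193/2500000*((3:ℕ)*t^2) + 2046973257/80000000*((4:ℕ)*t^3)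
        + -4072887819/80000000*((6:ℕ)*t^5) + 9891298989/320000000*((8:ℕ)*t^7)) := by
    simp only [P2]; push_cast; ring
  rw [this]
  exact h

private lemma deriv_P : deriv P = P1 := funext fun t => (hasDerivAt_P t).deriv

private lemma deriv_P1 : deriv P1 = P2 := funext fun t => (hasDerivAt_P1 t).deriv

private lemma sqrt2_bounds : (1.414:ℝ) ≤ Real.sqrt 2 ∧ Real.sqrt 2 ≤ 1.415 := by
  have h := Real.sq_sqrt (by norm_num : (2:ℝ) ≥ 0)
  have h0 := Real.sqrt_nonneg 2
  constructor <;> nlinarith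

private lemma mem_bounds {x : ℝ}
    (hx : x ∈ Set.Icc (-(Real.sqrt 2)/4 - 1/2) (-(1 / Real.sqrt 2))) :
    -0.86 ≤ x ∧ x ≤ -0.70 := by
  obtain ⟨h1, h2⟩ := hx
  obtain ⟨hl, hr⟩ := sqrt2_bounds
  have hpos : (0:ℝ) < Real.sqrt 2 := by linarith
  constructor
  · linarith
  · have : (0.70:ℝ) ≤ 1 / Real.sqrt 2 := by
      rw [le_div_iff₀ hpos]; nlinarith
    linarith

private lemma P1_nonpos {x : ℝ} (h1 : -0.86 ≤ x) (h2 : x ≤ -0.70) : P1 x ≤ 0 := by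
  simp only [P1]
  nlinarith [mul_nonneg (by linarith : (0:ℝ) ≤ x + 0.86) (by linarith : (0:ℝ) ≤ -0.70 - x),
    sq_nonneg (x+0.78), sq_nonneg (x^2 - 0.6), sq_nonneg (x^3 + 0.47), sq_nonneg (x^4 - 0.37),
    sq_nonneg x, mul_nonneg (mul_nonneg (by linarith : (0:ℝ) ≤ x + 0.86) (by linarith : (0:ℝ) ≤ -0.70 - x)) (sq_nonneg x),
    mul_nonneg (mul_nonneg (by linarith : (0:ℝ) ≤ x + 0.86) (by linarith : (0:ℝ) ≤ -0.70 - x)) (sq_nonneg (x^2-0.6)),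
    mul_nonneg (mul_nonneg (by linarith : (0:ℝ) ≤ x + 0.86) (by linarith : (0:ℝ) ≤ -0.70 - x)) (sq_nonneg (x+0.78))]

private lemma P2_nonneg {x : ℝ} (h1 : -0.86 ≤ x) (h2 : x ≤ -0.70) : 0 ≤ P2 x := by
  simp only [P2]
  nlinarith [mul_nonneg (by linarith : (0:ℝ) ≤ x + 0.86) (by linarith : (0:ℝ) ≤ -0.70 - x),
    sq_nonneg (x+0.78), sq_nonneg (x^2 - 0.6), sq_nonneg (x^3 + 0.47),
    sq_nonneg x, mul_nonneg (mul_nonneg (by linarith : (0:ℝ) ≤ x + 0.86) (by linarith : (0:ℝ) ≤ -0.70 - x)) (sq_nonneg x),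
    mul_nonneg (mul_nonneg (by linarith : (0:ℝ) ≤ x + 0.86) (by linarith : (0:ℝ) ≤ -0.70 - x)) (sq_nonneg (x^2-0.6)),
    mul_nonneg (mul_nonneg (by linarith : (0:ℝ) ≤ x + 0.86) (by linarith : (0:ℝ) ≤ -0.70 - x)) (sq_nonneg (x+0.78))]

theorem f_convex_and_decreasing :
    ConvexOn ℝ (Set.Icc (-(Real.sqrt 2)/4 - 1/2) (-(1 / Real.sqrt 2))) f ∧
    AntitoneOn f (Set.Icc (-(Real.sqrt 2)/4 - 1/2) (-(1 / Real.sqrt 2))) := by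
  rw [f_eq_P]
  set s : Set ℝ := Set.Icc (-(Real.sqrt 2)/4 - 1/2) (-(1 / Real.sqrt 2)) with hs
  have hconv : Convex ℝ s := convex_Icc _ _
  have hPdiff : Differentiable ℝ P := fun t => (hasDerivAt_P t).differentiableAt
  have hP1diff : Differentiable ℝ P1 := fun t => (hasDerivAt_P1 t).differentiableAt
  have hcont : ContinuousOn P s := hPdiff.continuous.continuousOn
  have hint : ∀ x ∈ interior s, x ∈ s := fun x hx => interior_subset hx
  constructor
  · refine convexOn_of_deriv2_nonneg hconv hcont (hPdiff.differentiableOn)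
      (by rw [deriv_P]; exact hP1diff.differentiableOn) (fun x hx => ?_)
    have hb := mem_bounds (hint x hx)
    simp only [Function.iterate_succ, Function.iterate_zero, Function.comp_apply, id_eq,
      deriv_P, deriv_P1]
    exact P2_nonneg hb.1 hb.2
  · refine antitoneOn_of_deriv_nonpos hconv hcont (hPdiff.differentiableOn) (fun x hx => ?_)
    have hb := mem_bounds (hint x hx)
    rw [deriv_P]
    exact P1_nonpos hb.1 hb.2
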